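/- For ε > 0 the Fermi map T is injective on Σ_ε: if (s, θ, a, b) and (s', θ', a', b') both lie in Σ_ε = {(s, θ, a, b) : s ∈ (0, π/2), θ ∈ [0, 2π), a² + b² < 1/(ε² sin 2s)} and T(s, θ, a, b) = T(s', θ', a', b'), then s = s', θ = θ', a = a', and b = b'. Hence T defines a coordinate system on the tubular region T(Σ_ε) around Γ_ε. -/

import Mathlib

noncomputable section

open Complex Metric
open scoped Real

/-- ℂ² with the Euclidean (ℝ⁴) distance. -/
abbrev C2 : Type := EuclideanSpace ℂ (Fin 2)

/-- The point (z, w) ∈ ℂ². -/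
def pt (z w : ℂ) : C2 := (WithLp.equiv 2 (Fin 2 → ℂ)).symm ![z, w]

/-- The point of Γ with parameters (ρ, θ). -/
def gpt (ρ θ : ℝ) : C2 :=
  pt (((Real.sqrt 2 / 2 * ρ : ℝ) : ℂ) * Complex.exp ((θ : ℂ) * Complex.I))
     (((Real.sqrt 2 / 2 * ρ⁻¹ : ℝ) : ℂ) * Complex.exp ((θ : ℂ) * Complex.I))

/-- The special Lagrangian surface Γ ⊂ ℂ². -/
def Gam : Set C2 := {p | ∃ ρ θ : ℝ, 0 < ρ ∧ p = gpt ρ θ}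

/-- The point (ρ₁ e^{iθ₁}, ρ₂ e^{iθ₂}) ∈ ℂ². -/
def ppt (ρ₁ θ₁ ρ₂ θ₂ : ℝ) : C2 :=
  pt ((ρ₁ : ℂ) * Complex.exp ((θ₁ : ℂ) * Complex.I))
     ((ρ₂ : ℂ) * Complex.exp ((θ₂ : ℂ) * Complex.I))

/-- The point of Γ_ε with parameters (s, θ). -/
def gept (ε s θ : ℝ) : C2 :=
  pt (((Real.cos s / (ε * Real.sqrt (Real.sin (2 * s))) : ℝ) : ℂ)
        * Complex.exp ((θ : ℂ) * Complex.I))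
     (((Real.sin s / (ε * Real.sqrt (Real.sin (2 * s))) : ℝ) : ℂ)
        * Complex.exp ((θ : ℂ) * Complex.I))

/-- The rescaled surface Γ_ε = (1/ε)Γ. -/
def GamE (ε : ℝ) : Set C2 := {p | ∃ s θ : ℝ, s ∈ Set.Ioo 0 (π / 2) ∧ p = gept ε s θ}

/-- The Fermi (normal exponential) map around Γ_ε. -/
def fermiT (ε s θ a b : ℝ) : C2 :=
  pt (Complex.exp ((θ : ℂ) * Complex.I)
        * (((Real.cos s / (ε * Real.sqrt (Real.sin (2 * s))) : ℝ) : ℂ)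
            + ((a : ℂ) - (b : ℂ) * Complex.I) * ((Real.sin s : ℝ) : ℂ)))
     (Complex.exp ((θ : ℂ) * Complex.I)
        * (((Real.sin s / (ε * Real.sqrt (Real.sin (2 * s))) : ℝ) : ℂ)
            + ((a : ℂ) + (b : ℂ) * Complex.I) * ((Real.cos s : ℝ) : ℂ)))

end

/-! The circle action `e^{iθ}` preserves `z w̄`, `|z|²` and `|w|²`. At `T(s, θ, a, b)`, with
`P = 1 / sin 2s ≥ 1` and `ζ = ε √(sin 2s) (a - b i)` in the unit disc, these invariants are
`2 ε² z w̄ = 1 + 2 P ζ + ζ²`, `ε² (|z|² + |w|²) = P (1 + |ζ|²) + 2 Re ζ` and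
`ε² (|z|² - |w|²) = P cos 2s (1 - |ζ|²)`. The first two determine `(P, ζ)`: on a level set
`ζ² + 2 P ζ = w` one has `ζ = √(w + P²) - P`, so `|ζ|²` decreases in `P`, while
`P (1 + |ζ|²) + 2 Re ζ` has derivative `(P² - |ζ|²) (1 - |ζ|²) / |w + P²| > 0`. The third
invariant then fixes `cos 2s`, hence `s`, and the phase fixes `θ`. -/

open Real Set
open ComplexConjugate

noncomputable section

namespace SqrtPath

/- For `w = c + k i`, `re + im i` is the principal square root of `w + t²`, smooth in `t` where
`0 < c + t ^ 2 ∨ k ≠ 0`; `distSq` is `|√(w + t²) - t|²`, and `scaledNormSq` is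
`P (1 + |ζ|²) + 2 Re ζ` at `P = t`, `ζ = √(w + t²) - t`. -/

def modulus (c k t : ℝ) : ℝ := √((c + t ^ 2) ^ 2 + k ^ 2)
def re (c k t : ℝ) : ℝ := √((modulus c k t + (c + t ^ 2)) / 2)
def im (c k t : ℝ) : ℝ := k / (2 * re c k t)
def distSq (c k t : ℝ) : ℝ := (re c k t - t) ^ 2 + im c k t ^ 2
def scaledNormSq (c k t : ℝ) : ℝ := t * (1 + distSq c k t) + 2 * (re c k t - t)

variable {c k t : ℝ}

lemma modulus_sq : modulus c k t ^ 2 = (c + t ^ 2) ^ 2 + k ^ 2 :=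
  sq_sqrt (by positivity)

lemma modulus_pos (hw : 0 < c + t ^ 2 ∨ k ≠ 0) : 0 < modulus c k t := by
  refine sqrt_pos.mpr ?_
  rcases hw with hw | hw <;> positivity

lemma modulus_add_pos (hw : 0 < c + t ^ 2 ∨ k ≠ 0) : 0 < modulus c k t + (c + t ^ 2) := by
  have hρ := modulus_pos hw
  rcases hw with hw | hk
  · linarith
  · have : 0 < k ^ 2 := by positivity
    nlinarith [modulus_sq (c := c) (k := k) (t := t)]

lemma re_pos (hw : 0 < c + t ^ 2 ∨ k ≠ 0) : 0 < re c k t :=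
  sqrt_pos.mpr (half_pos (modulus_add_pos hw))

lemma re_sq (hw : 0 < c + t ^ 2 ∨ k ≠ 0) : re c k t ^ 2 = (modulus c k t + (c + t ^ 2)) / 2 :=
  sq_sqrt (half_pos (modulus_add_pos hw)).le

lemma re_sq_add_im_sq (hw : 0 < c + t ^ 2 ∨ k ≠ 0) :
    re c k t ^ 2 + im c k t ^ 2 = modulus c k t := by
  have hre := re_pos hw
  have hre_sq := re_sq hw
  rw [im, div_pow, mul_pow]
  field_simp
  linear_combination (4 * re c k t ^ 2 + 2 * (c + t ^ 2 - modulus c k t)) * hre_sq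
    - modulus_sq (c := c) (k := k) (t := t)

lemma distSq_eq (hw : 0 < c + t ^ 2 ∨ k ≠ 0) :
    distSq c k t = modulus c k t - 2 * t * re c k t + t ^ 2 := by
  rw [distSq, ← re_sq_add_im_sq hw]
  ring

lemma distSq_nonneg : 0 ≤ distSq c k t := by
  rw [distSq]; positivity

lemma hasDerivAt_modulus (hw : 0 < c + t ^ 2 ∨ k ≠ 0) :
    HasDerivAt (modulus c k) (2 * t * (c + t ^ 2) / modulus c k t) t := by
  have hρ := modulus_pos hw
  refine HasDerivAt.congr_deriv (f := modulus c k)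
    ((((hasDerivAt_pow 2 t).const_add c).pow 2).add_const (k ^ 2) |>.sqrt
      (sqrt_pos.mp hρ).ne') ?_
  rw [show √(((fun x => c + x ^ 2) ^ 2) t + k ^ 2) = modulus c k t from rfl]
  field_simp
  norm_num
  ring

lemma hasDerivAt_re (hw : 0 < c + t ^ 2 ∨ k ≠ 0) :
    HasDerivAt (re c k) (t * re c k t / modulus c k t) t := by
  have hρ := modulus_pos hw
  have hre := re_pos hw
  refine HasDerivAt.congr_deriv (f := re c k)
    ((((hasDerivAt_modulus hw).add ((hasDerivAt_pow 2 t).const_add c)).div_const 2).sqrt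
      (half_pos (modulus_add_pos hw)).ne') ?_
  simp only [Pi.add_apply]
  rw [show √((modulus c k t + (c + t ^ 2)) / 2) = re c k t from rfl]
  field_simp
  norm_num
  linear_combination (-4 * t) * re_sq hw

lemma hasDerivAt_im (hw : 0 < c + t ^ 2 ∨ k ≠ 0) :
    HasDerivAt (im c k) (-(t * im c k t / modulus c k t)) t := by
  have hρ := modulus_pos hw
  have hre := re_pos hw
  refine HasDerivAt.congr_deriv (f := im c k)
    ((hasDerivAt_const t k).div ((hasDerivAt_re hw).const_mul 2) (by positivity)) ?_
  rw [im]
  field_simp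
  ring

lemma hasDerivAt_distSq (hw : 0 < c + t ^ 2 ∨ k ≠ 0) :
    HasDerivAt (distSq c k) (-(2 * re c k t * distSq c k t / modulus c k t)) t := by
  have hρ := modulus_pos hw
  refine HasDerivAt.congr_deriv (f := distSq c k)
   ((((hasDerivAt_re hw).sub (hasDerivAt_id t)).pow 2).add ((hasDerivAt_im hw).pow 2)) ?_
  simp only [Pi.sub_apply, id]
  field_simp
  norm_num
  linear_combination (2 * re c k t) * distSq_eq hw - (2 * t) * re_sq_add_im_sq hw

lemma hasDerivAt_scaledNormSq (hw : 0 < c + t ^ 2 ∨ k ≠ 0) :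
    HasDerivAt (scaledNormSq c k)
      ((t ^ 2 - distSq c k t) * (1 - distSq c k t) / modulus c k t) t := by
  have hρ := modulus_pos hw
  refine HasDerivAt.congr_deriv (f := scaledNormSq c k)
   (((hasDerivAt_id t).mul ((hasDerivAt_distSq hw).const_add 1)).add
    (((hasDerivAt_re hw).sub (hasDerivAt_id t)).const_mul 2)) ?_
  simp only [id]
  field_simp
  linear_combination (1 - distSq c k t) * distSq_eq hw

lemma pos_or_ne_zero_of_le {P : ℝ} (hP : 0 ≤ P) (ht : P ≤ t)
    (hw : 0 < c + P ^ 2 ∨ k ≠ 0) :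
    0 < c + t ^ 2 ∨ k ≠ 0 :=
  hw.imp_left fun h => by nlinarith

lemma antitoneOn_distSq {P : ℝ} (hP : 0 ≤ P) (hw : 0 < c + P ^ 2 ∨ k ≠ 0) :
    AntitoneOn (distSq c k) (Ici P) := by
  have hw' (t : ℝ) (ht : t ∈ Ici P) := pos_or_ne_zero_of_le hP ht hw
  refine antitoneOn_of_hasDerivWithinAt_nonpos (convex_Ici P)
    (fun t ht => (hasDerivAt_distSq (hw' t ht)).continuousAt.continuousWithinAt)
    (fun t ht => (hasDerivAt_distSq (hw' t (interior_subset ht))).hasDerivWithinAt)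
    fun t ht => ?_
  have hwt := hw' t (interior_subset ht)
  have := re_pos hwt
  have := modulus_pos hwt
  have := distSq_nonneg (c := c) (k := k) (t := t)
  rw [neg_nonpos]
  positivity

lemma strictMonoOn_scaledNormSq {P : ℝ} (hP : 1 ≤ P) (hw : 0 < c + P ^ 2 ∨ k ≠ 0)
    (hd : distSq c k P < 1) : StrictMonoOn (scaledNormSq c k) (Ici P) := by
  have hw' (t : ℝ) (ht : t ∈ Ici P) := pos_or_ne_zero_of_le (by linarith) ht hw
  refine strictMonoOn_of_hasDerivWithinAt_pos (convex_Ici P)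
    (fun t ht => (hasDerivAt_scaledNormSq (hw' t ht)).continuousAt.continuousWithinAt)
    (fun t ht => (hasDerivAt_scaledNormSq (hw' t (interior_subset ht))).hasDerivWithinAt)
    fun t ht => ?_
  rw [interior_Ici] at ht
  have hdt : distSq c k t < 1 :=
    (antitoneOn_distSq (by linarith) hw self_mem_Ici (mem_Ici.mpr ht.le) ht.le).trans_lt hd
  have ht1 : 1 < t := hP.trans_lt ht
  have := distSq_nonneg (c := c) (k := k) (t := t)
  exact div_pos (mul_pos (by nlinarith) (by linarith))
    (modulus_pos (hw' t (mem_Ici.mpr ht.le)))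

/-- For `w = ζ² + 2 P ζ` with `ζ = α + β i`, the principal square root of `w + P²` is
`ζ + P`. -/
lemma re_eq_and_im_eq {P α β : ℝ} (hc : c = α ^ 2 - β ^ 2 + 2 * P * α)
    (hk : k = 2 * β * (α + P)) (hpos : 0 < α + P) :
    re c k P = α + P ∧ im c k P = β := by
  have hmod : modulus c k P = (α + P) ^ 2 + β ^ 2 := by
    rw [modulus, show (c + P ^ 2) ^ 2 + k ^ 2 = ((α + P) ^ 2 + β ^ 2) ^ 2 by rw [hc, hk]; ring]
    exact sqrt_sq (by positivity)
  have hre : re c k P = α + P := by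
    rw [re, hmod, show ((α + P) ^ 2 + β ^ 2 + (c + P ^ 2)) / 2 = (α + P) ^ 2 by rw [hc]; ring]
    exact sqrt_sq hpos.le
  refine ⟨hre, ?_⟩
  rw [im, hre, hk]
  field_simp

end SqrtPath

open SqrtPath in
lemma scaled_invariant_lt_of_lt {P Q α β α' β' : ℝ} (hP : 1 ≤ P)
    (hd : α ^ 2 + β ^ 2 < 1) (hd' : α' ^ 2 + β' ^ 2 < 1) (hPQ : P < Q)
    (e1 : α ^ 2 - β ^ 2 + 2 * P * α = α' ^ 2 - β' ^ 2 + 2 * Q * α')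
    (e2 : β * (P + α) = β' * (Q + α')) :
    P * (1 + (α ^ 2 + β ^ 2)) + 2 * α < Q * (1 + (α' ^ 2 + β' ^ 2)) + 2 * α' := by
  set c := α ^ 2 - β ^ 2 + 2 * P * α
  set k := 2 * β * (α + P)
  have hpos : 0 < α + P := by nlinarith
  have hpos' : 0 < α' + Q := by nlinarith
  obtain ⟨hre, him⟩ := re_eq_and_im_eq (c := c) (k := k) rfl rfl hpos
  obtain ⟨hre', him'⟩ :=
    re_eq_and_im_eq (c := c) (k := k) e1 (by linear_combination 2 * e2) hpos'
  have hw : 0 < c + P ^ 2 ∨ k ≠ 0 := by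
    by_cases hβ : β = 0
    · left
      simp only [c, hβ]
      nlinarith
    · exact Or.inr (by positivity)
  have hdP : distSq c k P = α ^ 2 + β ^ 2 := by rw [distSq, hre, him]; ring
  have hdQ : distSq c k Q = α' ^ 2 + β' ^ 2 := by rw [distSq, hre', him']; ring
  have hmono := strictMonoOn_scaledNormSq hP hw (hdP ▸ hd) self_mem_Ici hPQ.le hPQ
  rwa [scaledNormSq, scaledNormSq, hdP, hdQ, hre, hre', add_sub_cancel_right,
    add_sub_cancel_right] at hmono

lemma eq_of_scaled_invariants_eq {P Q α β α' β' : ℝ} (hP : 1 ≤ P) (hQ : 1 ≤ Q)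
    (hd : α ^ 2 + β ^ 2 < 1) (hd' : α' ^ 2 + β' ^ 2 < 1)
    (e1 : α ^ 2 - β ^ 2 + 2 * P * α = α' ^ 2 - β' ^ 2 + 2 * Q * α')
    (e2 : β * (P + α) = β' * (Q + α'))
    (e3 : P * (1 + (α ^ 2 + β ^ 2)) + 2 * α = Q * (1 + (α' ^ 2 + β' ^ 2)) + 2 * α') :
    P = Q ∧ α = α' ∧ β = β' := by
  obtain rfl : P = Q := by
    rcases lt_trichotomy P Q with h | h | h
    · exact absurd e3 (scaled_invariant_lt_of_lt hP hd hd' h e1 e2).ne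
    · exact h
    · exact absurd e3 (scaled_invariant_lt_of_lt hQ hd' hd h e1.symm e2.symm).ne'
  have hα : -1 < α := by nlinarith
  have hα' : -1 < α' := by nlinarith
  have hsum : 0 < (α + α' + 2 * P) ^ 2 + (β + β') ^ 2 := by
    have : 0 < α + α' + 2 * P := by linarith
    positivity
  have key : (α - α') * ((α + α' + 2 * P) ^ 2 + (β + β') ^ 2) = 0 := by
    linear_combination (α + α' + 2 * P) * e1 + 2 * (β + β') * e2
  obtain rfl : α = α' := by
    linarith [(mul_eq_zero.mp key).resolve_right hsum.ne']
  exact ⟨rfl, rfl, mul_right_cancel₀ (by linarith : P + α ≠ 0) e2⟩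

end

lemma mul_conj_smul {ι : Type*} {l : ℂ} (hl : ‖l‖ = 1) (v : EuclideanSpace ℂ ι)
    (i j : ι) :
    (l • v) i * conj ((l • v) j) = v i * conj (v j) := by
  simp only [PiLp.smul_apply, smul_eq_mul, map_mul]
  calc l * v i * (conj l * conj (v j)) = l * conj l * (v i * conj (v j)) := by ring
    _ = v i * conj (v j) := by rw [Complex.mul_conj', hl]; simp

lemma eq_of_exp_mul_I_smul_eq {E : Type*} [NormedAddCommGroup E] [NormedSpace ℂ E] {v : E}
    (hv : v ≠ 0) {θ θ' : ℝ} (hθ : θ ∈ Ico 0 (2 * π)) (hθ' : θ' ∈ Ico 0 (2 * π))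
    (h : Complex.exp (θ * Complex.I) • v = Complex.exp (θ' * Complex.I) • v) : θ = θ' :=
  Circle.exp_injOn_Ico (by simp) hθ hθ' (Circle.ext (smul_left_injective ℂ hv h))

lemma fermiT_eq_smul (ε s θ a b : ℝ) :
    fermiT ε s θ a b = Complex.exp (θ * Complex.I) • fermiT ε s 0 a b := by
  ext i
  fin_cases i <;> simp [fermiT, pt]

lemma mul_conj_eq_of_fermiT_eq {ε s θ a b s' θ' a' b' : ℝ}
    (h : fermiT ε s θ a b = fermiT ε s' θ' a' b') (i j : Fin 2) :
    fermiT ε s 0 a b i * conj (fermiT ε s 0 a b j) =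
      fermiT ε s' 0 a' b' i * conj (fermiT ε s' 0 a' b' j) := by
  rw [← mul_conj_smul (Complex.norm_exp_ofReal_mul_I θ), ← fermiT_eq_smul, h, fermiT_eq_smul,
    mul_conj_smul (Complex.norm_exp_ofReal_mul_I θ')]

/-- `(fermiScale ε s)⁻¹` is the norm of the base point `gept ε s θ` of `Γ_ε`. -/
noncomputable def fermiScale (ε s : ℝ) : ℝ := ε * √(Real.sin (2 * s))

section Invariants

variable {ε s : ℝ} (a b : ℝ)

lemma fermiScale_sq (hσ : 0 ≤ Real.sin (2 * s)) :
    fermiScale ε s ^ 2 = ε ^ 2 * Real.sin (2 * s) := by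
  rw [fermiScale, mul_pow, sq_sqrt hσ]

lemma fermiScale_ne_zero (hε : ε ≠ 0) (hσ : 0 < Real.sin (2 * s)) : fermiScale ε s ≠ 0 :=
  mul_ne_zero hε (sqrt_pos.mpr hσ).ne'

lemma fermiT_zero_apply_zero : fermiT ε s 0 a b 0 =
    ⟨Real.cos s / fermiScale ε s + a * Real.sin s, -(b * Real.sin s)⟩ := by
  apply Complex.ext <;> simp [fermiT, pt, fermiScale, -Complex.ofReal_div, Complex.sin_ofReal_re]

lemma fermiT_zero_apply_one : fermiT ε s 0 a b 1 =
    ⟨Real.sin s / fermiScale ε s + a * Real.cos s, b * Real.cos s⟩ := by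
  apply Complex.ext <;> simp [fermiT, pt, fermiScale, -Complex.ofReal_div, Complex.cos_ofReal_re]

lemma fermiT_re_mul_conj (hε : ε ≠ 0) (hσ : 0 < Real.sin (2 * s)) :
    2 * ε ^ 2 * (fermiT ε s 0 a b 0 * conj (fermiT ε s 0 a b 1)).re =
      1 + ((fermiScale ε s * a) ^ 2 - (fermiScale ε s * b) ^ 2
        + 2 * (Real.sin (2 * s))⁻¹ * (fermiScale ε s * a)) := by
  have hμ := fermiScale_sq (ε := ε) hσ.le
  have hμ0 := fermiScale_ne_zero hε hσ
  rw [fermiT_zero_apply_zero, fermiT_zero_apply_one]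
  simp only [Complex.mul_re, Complex.conj_re, Complex.conj_im]
  field_simp
  linear_combination (2 * ε ^ 2 * Real.sin (2 * s) * fermiScale ε s * a) * sin_sq_add_cos_sq s
    - (Real.sin (2 * s) * (1 + fermiScale ε s ^ 2 * (a ^ 2 - b ^ 2)) + 2 * fermiScale ε s * a)
      * hμ
    - ε ^ 2 * Real.sin (2 * s) * (1 + fermiScale ε s ^ 2 * (a ^ 2 - b ^ 2)) * sin_two_mul s

lemma fermiT_im_mul_conj (hε : ε ≠ 0) (hσ : 0 < Real.sin (2 * s)) :
    ε ^ 2 * (fermiT ε s 0 a b 0 * conj (fermiT ε s 0 a b 1)).im =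
      -(fermiScale ε s * b * ((Real.sin (2 * s))⁻¹ + fermiScale ε s * a)) := by
  have hμ := fermiScale_sq (ε := ε) hσ.le
  have hμ0 := fermiScale_ne_zero hε hσ
  rw [fermiT_zero_apply_zero, fermiT_zero_apply_one]
  simp only [Complex.mul_im, Complex.conj_re, Complex.conj_im]
  field_simp
  linear_combination (-(ε ^ 2 * b * Real.sin (2 * s))) * sin_sq_add_cos_sq s
    + (ε ^ 2 * b * Real.sin (2 * s) * fermiScale ε s * a) * sin_two_mul s
    + (b * (1 + fermiScale ε s * a * Real.sin (2 * s))) * hμ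

lemma fermiT_re_mul_self_conj_add (hε : ε ≠ 0) (hσ : 0 < Real.sin (2 * s)) :
    ε ^ 2 * ((fermiT ε s 0 a b 0 * conj (fermiT ε s 0 a b 0)).re
        + (fermiT ε s 0 a b 1 * conj (fermiT ε s 0 a b 1)).re) =
      (Real.sin (2 * s))⁻¹ * (1 + ((fermiScale ε s * a) ^ 2 + (fermiScale ε s * b) ^ 2))
        + 2 * (fermiScale ε s * a) := by
  have hμ := fermiScale_sq (ε := ε) hσ.le
  have hμ0 := fermiScale_ne_zero hε hσ
  rw [fermiT_zero_apply_zero, fermiT_zero_apply_one]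
  simp only [Complex.mul_re, Complex.conj_re, Complex.conj_im]
  field_simp
  linear_combination (-(2 * ε ^ 2 * Real.sin (2 * s) * fermiScale ε s * a)) * sin_two_mul s
    + (ε ^ 2 * Real.sin (2 * s) * (1 + fermiScale ε s ^ 2 * (a ^ 2 + b ^ 2)))
      * sin_sq_add_cos_sq s
    - (1 + fermiScale ε s ^ 2 * (a ^ 2 + b ^ 2) + 2 * fermiScale ε s * a * Real.sin (2 * s))
      * hμ

lemma fermiT_re_mul_self_conj_sub (hε : ε ≠ 0) (hσ : 0 < Real.sin (2 * s)) :
    ε ^ 2 * ((fermiT ε s 0 a b 0 * conj (fermiT ε s 0 a b 0)).re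
        - (fermiT ε s 0 a b 1 * conj (fermiT ε s 0 a b 1)).re) =
      Real.cos (2 * s) * (Real.sin (2 * s))⁻¹
        * (1 - ((fermiScale ε s * a) ^ 2 + (fermiScale ε s * b) ^ 2)) := by
  have hμ := fermiScale_sq (ε := ε) hσ.le
  have hμ0 := fermiScale_ne_zero hε hσ
  rw [fermiT_zero_apply_zero, fermiT_zero_apply_one]
  simp only [Complex.mul_re, Complex.conj_re, Complex.conj_im]
  field_simp
  linear_combination
    (-((Real.cos s ^ 2 - Real.sin s ^ 2) * (1 - fermiScale ε s ^ 2 * (a ^ 2 + b ^ 2)))) * hμ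
    - (fermiScale ε s ^ 2 * (1 - fermiScale ε s ^ 2 * (a ^ 2 + b ^ 2))) * cos_two_mul' s

end Invariants

lemma sin_two_mul_pos {s : ℝ} (hs : s ∈ Ioo 0 (π / 2)) : 0 < Real.sin (2 * s) :=
  Real.sin_pos_of_pos_of_lt_pi (by linarith [hs.1]) (by linarith [hs.2])

lemma one_le_inv_sin_two_mul {s : ℝ} (hσ : 0 < Real.sin (2 * s)) :
    1 ≤ (Real.sin (2 * s))⁻¹ :=
  (one_le_inv₀ hσ).mpr (Real.sin_le_one _)

lemma scaled_sq_add_sq_lt_one {ε s a b : ℝ} (hσ : 0 < Real.sin (2 * s))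
    (hab : a ^ 2 + b ^ 2 < 1 / (ε ^ 2 * Real.sin (2 * s))) :
    (fermiScale ε s * a) ^ 2 + (fermiScale ε s * b) ^ 2 < 1 := by
  rcases eq_or_ne ε 0 with rfl | hε
  · simp [fermiScale]
  have hpos : 0 < ε ^ 2 * Real.sin (2 * s) := by positivity
  rw [lt_div_iff₀ hpos] at hab
  rw [mul_pow, mul_pow, ← mul_add, fermiScale_sq hσ.le]
  linarith

lemma fermiT_zero_ne_zero {ε s a b : ℝ} (hε : ε ≠ 0) (hs : s ∈ Ioo 0 (π / 2))
    (hab : a ^ 2 + b ^ 2 < 1 / (ε ^ 2 * Real.sin (2 * s))) : fermiT ε s 0 a b ≠ 0 := by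
  have hσ := sin_two_mul_pos hs
  have hP := one_le_inv_sin_two_mul hσ
  have hd := scaled_sq_add_sq_lt_one hσ hab
  intro h
  have h0 := fermiT_re_mul_self_conj_add a b hε hσ
  rw [h] at h0
  simp only [PiLp.zero_apply, zero_mul, Complex.zero_re, add_zero, mul_zero] at h0
  nlinarith [sq_nonneg (fermiScale ε s * b), sq_nonneg (1 + fermiScale ε s * a)]

lemma sin_two_mul_eq_and_eq_of_fermiT_eq {ε s θ a b s' θ' a' b' : ℝ} (hε : ε ≠ 0)
    (hs : s ∈ Ioo 0 (π / 2)) (hab : a ^ 2 + b ^ 2 < 1 / (ε ^ 2 * Real.sin (2 * s)))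
    (hs' : s' ∈ Ioo 0 (π / 2)) (hab' : a' ^ 2 + b' ^ 2 < 1 / (ε ^ 2 * Real.sin (2 * s')))
    (h : fermiT ε s θ a b = fermiT ε s' θ' a' b') :
    Real.sin (2 * s) = Real.sin (2 * s') ∧ a = a' ∧ b = b' := by
  have hσ := sin_two_mul_pos hs
  have hσ' := sin_two_mul_pos hs'
  have h01 := mul_conj_eq_of_fermiT_eq h 0 1
  have e1 := congrArg (fun z => 2 * ε ^ 2 * z.re) h01
  have e2 := congrArg (fun z => ε ^ 2 * z.im) h01
  have e3 := congrArg₂ (fun z w => ε ^ 2 * (z.re + w.re))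
    (mul_conj_eq_of_fermiT_eq h 0 0) (mul_conj_eq_of_fermiT_eq h 1 1)
  simp only [fermiT_re_mul_conj _ _ hε hσ, fermiT_re_mul_conj _ _ hε hσ',
    fermiT_im_mul_conj _ _ hε hσ, fermiT_im_mul_conj _ _ hε hσ',
    fermiT_re_mul_self_conj_add _ _ hε hσ, fermiT_re_mul_self_conj_add _ _ hε hσ'] at e1 e2 e3
  obtain ⟨hP, hα, hβ⟩ := eq_of_scaled_invariants_eq (one_le_inv_sin_two_mul hσ)
    (one_le_inv_sin_two_mul hσ') (scaled_sq_add_sq_lt_one hσ hab)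
    (scaled_sq_add_sq_lt_one hσ' hab') (by linarith) (neg_inj.mp e2) e3
  have hσσ := inv_injective hP
  have hμ : fermiScale ε s = fermiScale ε s' := by rw [fermiScale, fermiScale, hσσ]
  rw [← hμ] at hα hβ
  exact ⟨hσσ, mul_left_cancel₀ (fermiScale_ne_zero hε hσ) hα,
    mul_left_cancel₀ (fermiScale_ne_zero hε hσ) hβ⟩

lemma eq_of_fermiT_eq_of_sin_two_mul_eq {ε s θ a b s' θ' : ℝ} (hε : ε ≠ 0)
    (hs : s ∈ Ioo 0 (π / 2)) (hab : a ^ 2 + b ^ 2 < 1 / (ε ^ 2 * Real.sin (2 * s)))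
    (hs' : s' ∈ Ioo 0 (π / 2)) (hσσ : Real.sin (2 * s) = Real.sin (2 * s'))
    (h : fermiT ε s θ a b = fermiT ε s' θ' a b) : s = s' := by
  have hσ := sin_two_mul_pos hs
  have e4 := congrArg₂ (fun z w => ε ^ 2 * (z.re - w.re))
    (mul_conj_eq_of_fermiT_eq h 0 0) (mul_conj_eq_of_fermiT_eq h 1 1)
  simp only [fermiT_re_mul_self_conj_sub _ _ hε hσ,
    fermiT_re_mul_self_conj_sub _ _ hε (hσσ ▸ hσ)] at e4
  rw [show fermiScale ε s' = fermiScale ε s by rw [fermiScale, fermiScale, hσσ], ← hσσ]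
    at e4
  have hK :
      0 < (Real.sin (2 * s))⁻¹ * (1 - ((fermiScale ε s * a) ^ 2 + (fermiScale ε s * b) ^ 2)) :=
    mul_pos (inv_pos.mpr hσ) (sub_pos.mpr (scaled_sq_add_sq_lt_one hσ hab))
  have hcos : Real.cos (2 * s) = Real.cos (2 * s') :=
    mul_right_cancel₀ hK.ne' (by linear_combination e4)
  have h2 := Real.injOn_cos ⟨by linarith [hs.1], by linarith [hs.2]⟩
    ⟨by linarith [hs'.1], by linarith [hs'.2]⟩ hcos
  linarith

theorem fermi_injective (ε : ℝ) (hε : 0 < ε)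
    (s θ a b s' θ' a' b' : ℝ)
    (hs : s ∈ Set.Ioo 0 (π / 2)) (hθ : θ ∈ Set.Ico 0 (2 * π))
    (hab : a ^ 2 + b ^ 2 < 1 / (ε ^ 2 * Real.sin (2 * s)))
    (hs' : s' ∈ Set.Ioo 0 (π / 2)) (hθ' : θ' ∈ Set.Ico 0 (2 * π))
    (hab' : a' ^ 2 + b' ^ 2 < 1 / (ε ^ 2 * Real.sin (2 * s')))
    (heq : fermiT ε s θ a b = fermiT ε s' θ' a' b') :
    s = s' ∧ θ = θ' ∧ a = a' ∧ b = b' := by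
  obtain ⟨hσσ, rfl, rfl⟩ := sin_two_mul_eq_and_eq_of_fermiT_eq hε.ne' hs hab hs' hab' heq
  obtain rfl := eq_of_fermiT_eq_of_sin_two_mul_eq hε.ne' hs hab hs' hσσ heq
  rw [fermiT_eq_smul ε s θ, fermiT_eq_smul ε s θ'] at heq
  exact ⟨rfl, eq_of_exp_mul_I_smul_eq (fermiT_zero_ne_zero hε.ne' hs hab) hθ hθ' heq,
    rfl, rfl⟩
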